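/- With notation as in the context, let T^c denote the image of T under the composite T → T_E → T_E^c (the second projection of T_E ≅ E × T_E^c). Then the kernel of the surjection T ↠ T^c equals T ∩ eT, and, regarding 𝒪 as a T-algebra via λ, there is an 𝒪-algebra isomorphism 𝒪 ⊗_T T^c ≅ 𝒪/η_λ. -/

import Mathlib

/-!
Since `T_E` is reduced and `e` lies in every prime of `T_E` except `ker λ_E ∋ 1 - e`, the product
of `e` with any element of `ker λ_E` lies in every prime, hence vanishes. So `e` is idempotent and
`ker λ_E = (1 - e) T_E`, which gives the first claim and identifies the kernel of `T → T^c` with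
`T ∩ Ann(ker λ_E)`. As `T` is flat over `𝒪`, it embeds into its localization `T_E`, and this
intersection is `Ann_T(ker λ)`. Finally `𝒪 ⊗_T T / Ann_T(ker λ) ≅ 𝒪 / λ(Ann_T(ker λ)) = 𝒪 / η_λ`.
-/

open scoped TensorProduct nonZeroDivisors

theorem Module.Flat.algebraMapSubmonoid_le_nonZeroDivisors {R A : Type*} [CommRing R]
    [CommRing A] [Algebra R A] [Module.Flat R A] :
    Algebra.algebraMapSubmonoid A R⁰ ≤ A⁰ := by
  rintro _ ⟨c, hc, rfl⟩
  rw [mem_nonZeroDivisors_iff_right]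
  intro a ha
  rw [mul_comm, ← Algebra.smul_def] at ha
  exact Module.Flat.isSMulRegular_of_nonZeroDivisors hc (ha.trans (smul_zero c).symm)

theorem IsLocalization.isReduced {R S : Type*} [CommRing R] [CommRing S] [Algebra R S]
    (M : Submonoid R) [IsLocalization M S] [IsReduced R] : IsReduced S :=
  isReduced_of_injective (IsLocalization.algEquiv M (Localization M) S).symm
    (AlgEquiv.injective _)

theorem IsLocalization.comap_annihilator {R S : Type*} [CommRing R] [CommRing S] [Algebra R S]
    {M : Submonoid R} [IsLocalization M S] (hM : M ≤ R⁰) (J : Ideal S) :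
    (Submodule.annihilator J).comap (algebraMap R S) =
      Submodule.annihilator (J.comap (algebraMap R S)) := by
  ext r
  simp only [Ideal.mem_comap, Submodule.mem_annihilator, smul_eq_mul]
  constructor
  · intro h k hk
    exact IsLocalization.injective S hM (by rw [map_mul, h _ hk, map_zero])
  · intro h x hx
    obtain ⟨⟨k, s⟩, hks⟩ := IsLocalization.surj M x
    have hk : k ∈ J.comap (algebraMap R S) := by
      rw [Ideal.mem_comap, ← hks]
      exact J.mul_mem_right _ hx
    refine (IsLocalization.map_units S s).mul_left_eq_zero.mp ?_
    rw [mul_assoc, hks, ← map_mul, h k hk, map_zero]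

section IsReduced

variable {R : Type*} [CommRing R] [IsReduced R] {P : Ideal R} {e : R}

theorem mul_eq_zero_of_mem_of_forall_isPrime_ne
    (he : ∀ Q : Ideal R, Q.IsPrime → Q ≠ P → e ∈ Q) {x : R} (hx : x ∈ P) : e * x = 0 :=
  IsReduced.eq_zero _ <| nilpotent_iff_mem_prime.2 fun Q hQ => by
    by_cases hQP : Q = P
    · exact Q.mul_mem_left e (hQP ▸ hx)
    · exact Q.mul_mem_right x (he Q hQ hQP)

variable (he : ∀ Q : Ideal R, Q.IsPrime → Q ≠ P → e ∈ Q) (hP : 1 - e ∈ P)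
include he hP

theorem isIdempotentElem_of_forall_isPrime_ne : IsIdempotentElem e :=
  isIdempotentElem_iff_mul_one_sub_self.2 (mul_eq_zero_of_mem_of_forall_isPrime_ne he hP)

theorem span_one_sub_eq_of_forall_isPrime_ne : Ideal.span {1 - e} = P := by
  refine le_antisymm ((Ideal.span_singleton_le_iff_mem P).2 hP) fun x hx => ?_
  rw [Ideal.mem_span_singleton']
  exact ⟨x, by linear_combination -mul_eq_zero_of_mem_of_forall_isPrime_ne he hx⟩

end IsReduced

theorem statement13_general
    {O : Type*} [CommRing O]
    {E : Type*} [Field E] [Algebra O E] [IsFractionRing O E]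
    {T : Type*} [CommRing T] [IsReduced T]
    [Algebra O T] [Module.Flat O T]
    (lam : T →ₐ[O] O)
    [Algebra T O] (halg : ∀ t : T, algebraMap T O t = lam t)
    {TE : Type*} [CommRing TE] [Algebra T TE] [Algebra E TE]
    [IsLocalization (Algebra.algebraMapSubmonoid T (nonZeroDivisors O)) TE]
    (lamE : TE →ₐ[E] E) (e : TE)
    (hlamE : ∀ t : T, lamE (algebraMap T TE t) = algebraMap O E (lam t))
    (he1 : lamE e = 1)
    (he2 : ∀ P : Ideal TE, P.IsPrime → P ≠ RingHom.ker lamE → e ∈ P) :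
    (∀ t : T, ((1 - e) * algebraMap T TE t = 0) ↔
        (∃ t' : T, algebraMap T TE t = e * algebraMap T TE t')) ∧
    Nonempty ((O ⊗[T]
        (T ⧸ (Ideal.comap (algebraMap T TE) (Submodule.annihilator (Ideal.span {1 - e})))))
      ≃ₐ[O] (O ⧸ Ideal.map lam (Submodule.annihilator (RingHom.ker lam)))) := by
  have : IsReduced TE := IsLocalization.isReduced (Algebra.algebraMapSubmonoid T O⁰)
  have hP : 1 - e ∈ RingHom.ker lamE := by rw [RingHom.mem_ker, map_sub, map_one, he1, sub_self]
  have hidem := (isIdempotentElem_of_forall_isPrime_ne he2 hP).one_sub_mul_self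
  have hker : (RingHom.ker lamE).comap (algebraMap T TE) = RingHom.ker lam := by
    ext t
    simp only [Ideal.mem_comap, RingHom.mem_ker, hlamE, IsFractionRing.to_map_eq_zero_iff]
  refine ⟨fun t => ⟨fun h => ⟨t, by linear_combination h⟩, ?_⟩, ?_⟩
  · rintro ⟨t', ht'⟩
    rw [ht', ← mul_assoc, hidem, zero_mul]
  rw [span_one_sub_eq_of_forall_isPrime_ne he2 hP,
    IsLocalization.comap_annihilator
      (Module.Flat.algebraMapSubmonoid_le_nonZeroDivisors (R := O)), hker]
  exact ⟨(Algebra.TensorProduct.quotIdealMapEquivTensorQuot (A := T) O _).symm.trans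
    (Ideal.quotientEquivAlgOfEq O (congrArg (Ideal.map · _) (RingHom.ext halg :
      algebraMap T O = lam)))⟩

/-- In the standard setup (`𝒪` a complete DVR with fraction field `E`,
`T` a commutative reduced finite flat local `𝒪`-algebra, `λ : T → 𝒪`, `e ∈ T_E` the
idempotent attached to `λ`), let `T^c` be the image of `T` under the second projection
`T → T_E → T_E^c` (i.e. `t ↦ (1-e)·t`, so `T^c = T/K` where
`K = {t : T | (1-e)·t = 0}`).  Then `K = T ∩ eT`, and, regarding `𝒪` as a `T`-algebra
via `λ`, there is an `𝒪`-algebra isomorphism `𝒪 ⊗_T T^c ≅ 𝒪/η_λ`. -/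
theorem statement13
    {O : Type*} [CommRing O] [IsDomain O] [IsDiscreteValuationRing O]
    [IsAdicComplete (IsLocalRing.maximalIdeal O) O]
    {E : Type*} [Field E] [Algebra O E] [IsFractionRing O E]
    {T : Type*} [CommRing T] [IsReduced T] [IsLocalRing T]
    [Algebra O T] [Module.Finite O T] [Module.Flat O T]
    (lam : T →ₐ[O] O)
    [Algebra T O] (halg : ∀ t : T, algebraMap T O t = lam t)
    {TE : Type*} [CommRing TE] [Algebra T TE] [Algebra O TE] [Algebra E TE]
    [IsScalarTower O T TE] [IsScalarTower O E TE]
    [IsLocalization (Algebra.algebraMapSubmonoid T (nonZeroDivisors O)) TE]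
    (lamE : TE →ₐ[E] E) (e : TE)
    (hlamE : ∀ t : T, lamE (algebraMap T TE t) = algebraMap O E (lam t))
    (he1 : lamE e = 1)
    (he2 : ∀ P : Ideal TE, P.IsPrime → P ≠ RingHom.ker lamE → e ∈ P) :
    (∀ t : T, ((1 - e) * algebraMap T TE t = 0) ↔
        (∃ t' : T, algebraMap T TE t = e * algebraMap T TE t')) ∧
    Nonempty ((O ⊗[T]
        (T ⧸ (Ideal.comap (algebraMap T TE) (Submodule.annihilator (Ideal.span {1 - e})))))
      ≃ₐ[O] (O ⧸ Ideal.map lam (Submodule.annihilator (RingHom.ker lam)))) :=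
  statement13_general lam halg lamE e hlamE he1 he2
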